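/- arXiv:1505.00370 — 7 statements merged into one kernel-verified Lean document; each statement's English description precedes it below -/
import Mathlib

section
/- Let u₁, …, u_m ∈ ℝⁿ be linearly independent. Then the DEIM greedy algorithm applied to u₁, …, u_m is well defined: for every j = 2, …, m, the (j−1)×(j−1) matrix S_{j−1}ᵀU_{j−1} appearing at step j is invertible, and the residual r_j = u_j − U_{j−1}(S_{j−1}ᵀU_{j−1})⁻¹S_{j−1}ᵀu_j is a nonzero vector; consequently the m selected indices p₁, …, p_m are pairwise distinct. -/
open Matrix

/-- Spectral norm: operator norm induced by the Euclidean vector norm. -/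
noncomputable def specNorm {𝕜 : Type*} [RCLike 𝕜] {a b : ℕ} (A : Matrix (Fin a) (Fin b) 𝕜) : ℝ :=
  ‖LinearMap.toContinuousLinearMap (Matrix.toEuclideanLin A)‖

/-- The least index maximizing `|v i|`. -/
noncomputable def argmaxAbs {n : ℕ} [NeZero n] (v : Fin n → ℝ) : Fin n :=
  (Finset.univ.filter fun i => ∀ j, |v j| ≤ |v i|).min' (by
    obtain ⟨i, hi⟩ := Finite.exists_max fun i => |v i|
    exact ⟨i, Finset.mem_filter.mpr ⟨Finset.mem_univ i, hi⟩⟩)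

/-- The DEIM greedy index selection applied to the vectors `u 0, u 1, …` :
`deimP u j` is the index selected at (0-based) step `j`, namely the least index
maximizing the absolute value of the residual
`r_j = u_j − U_{j-1} z` where `S_{j-1}ᵀU_{j-1} z = S_{j-1}ᵀu_j`. -/
noncomputable def deimP {n : ℕ} [NeZero n] (u : ℕ → Fin n → ℝ) : ℕ → Fin n
  | j =>
    argmaxAbs fun a => u j a - ∑ l : Fin j,
      u l.val a *
        ((Matrix.of fun i k : Fin j => u k.val (deimP u i.val))⁻¹.mulVec
          fun i : Fin j => u j (deimP u i.val)) l
termination_by j => j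
decreasing_by all_goals exact i.isLt

/-- The DEIM residual `r_j = u_j − U_{j-1}(S_{j-1}ᵀU_{j-1})⁻¹S_{j-1}ᵀu_j`
at (0-based) step `j`. -/
noncomputable def deimRes {n : ℕ} [NeZero n] (u : ℕ → Fin n → ℝ) (j : ℕ) : Fin n → ℝ :=
  fun a => u j a - ∑ l : Fin j,
    u l.val a *
      ((Matrix.of fun i k : Fin j => u k.val (deimP u i.val))⁻¹.mulVec
        fun i : Fin j => u j (deimP u i.val)) l

/-! Write `M_j = S_jᵀU_j` and let `r_j` be the `j`-th residual. Subtracting from the last column of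
`M_{j+1}` the combination of the other columns with coefficients `z = M_j⁻¹ S_jᵀ u_j` turns it into
`(r_j(p_i))_{i ≤ j}`, which vanishes except at `i = j` because `U_j z` interpolates `u_j` at the
selected indices. Hence `det M_{j+1} = det M_j · r_j(p_j)`. Linear independence makes `r_j ≠ 0`, so
its largest entry `r_j(p_j)` is nonzero, and induction gives invertibility. Finally
`r_j(p_k) = 0 ≠ r_j(p_j)` for `k < j`, so the indices are distinct. -/

section Interpolation

variable {ι R : Type*} (f : ℕ → ι → R) (p : ℕ → ι) (j : ℕ)

/-- `S_jᵀU_j` for `U_j = [f 0, …, f (j-1)]` and `S_j = [e_{p 0}, …, e_{p (j-1)}]`. -/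
noncomputable def interpMatrix : Matrix (Fin j) (Fin j) R :=
  Matrix.of fun i k : Fin j => f k (p i)

theorem interpMatrix_submatrix_castSucc :
    (interpMatrix f p (j + 1)).submatrix Fin.castSucc Fin.castSucc = interpMatrix f p j :=
  rfl

variable [CommRing R]

noncomputable def interpCoeffs : Fin j → R :=
  (interpMatrix f p j)⁻¹ *ᵥ fun i : Fin j => f j (p i)

noncomputable def interpResidual : ι → R :=
  fun a => f j a - ∑ l : Fin j, f l a * interpCoeffs f p j l

theorem interpResidual_eq : interpResidual f p j = f j - ∑ l : Fin j, interpCoeffs f p j l • f l := by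
  ext a
  simp only [interpResidual, Pi.sub_apply, Finset.sum_apply, Pi.smul_apply, smul_eq_mul, mul_comm]

variable {f p j}

theorem interpResidual_apply_eq_zero (h : IsUnit (interpMatrix f p j)) (i : Fin j) :
    interpResidual f p j (p i) = 0 := by
  have hz : interpMatrix f p j *ᵥ interpCoeffs f p j = fun i : Fin j => f j (p i) := by
    rw [interpCoeffs, mulVec_mulVec, mul_nonsing_inv _ ((isUnit_iff_isUnit_det _).mp h),
      one_mulVec]
  have hi := congrFun hz i
  simp only [mulVec, dotProduct, interpMatrix, of_apply] at hi
  rw [interpResidual, hi, sub_self]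

theorem det_interpMatrix_succ (h : IsUnit (interpMatrix f p j)) :
    (interpMatrix f p (j + 1)).det = (interpMatrix f p j).det * interpResidual f p j (p j) := by
  set A := interpMatrix f p (j + 1)
  set c : Fin (j + 1) → R := Fin.snoc (-interpCoeffs f p j) 1
  have hcol : (fun k => ∑ l, c l • A k l) = fun k : Fin (j + 1) => interpResidual f p j (p k) := by
    ext k
    simp [c, A, interpMatrix, interpResidual, Fin.sum_univ_castSucc, sub_eq_neg_add, mul_comm]
  have hdet := det_updateCol_sum A (Fin.last j) c
  rw [hcol, show c (Fin.last j) = 1 from Fin.snoc_last _ _, one_smul] at hdet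
  rw [← hdet, det_succ_column _ (Fin.last j), Fintype.sum_eq_single (Fin.last j)]
  · rw [submatrix_updateCol_succAbove, Fin.succAbove_last, interpMatrix_submatrix_castSucc]
    simp [mul_comm]
  · intro i hi
    obtain ⟨i, rfl⟩ := Fin.exists_castSucc_eq.mpr hi
    simp [interpResidual_apply_eq_zero h i]

end Interpolation

theorem interpResidual_ne_zero {ι K : Type*} [Field K] {f : ℕ → ι → K} (p : ℕ → ι) {j : ℕ}
    (hf : LinearIndependent K fun l : Fin (j + 1) => f l) : interpResidual f p j ≠ 0 := by
  have hsnoc : (fun l : Fin (j + 1) => f l) = Fin.snoc (fun l : Fin j => f l) (f j) := by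
    ext l : 1
    refine Fin.lastCases ?_ (fun l => ?_) l <;> simp
  rw [hsnoc, linearIndependent_finSnoc] at hf
  intro h0
  rw [interpResidual_eq, sub_eq_zero] at h0
  exact hf.2 (h0 ▸ (Submodule.mem_span_range_iff_exists_fun K).mpr ⟨_, rfl⟩)

theorem abs_le_abs_argmaxAbs {n : ℕ} [NeZero n] (v : Fin n → ℝ) (i : Fin n) :
    |v i| ≤ |v (argmaxAbs v)| := by
  have h := Finset.min'_mem (Finset.univ.filter fun i => ∀ j, |v j| ≤ |v i|)
  exact (Finset.mem_filter.mp (h _)).2 i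

theorem apply_argmaxAbs_ne_zero {n : ℕ} [NeZero n] {v : Fin n → ℝ} (hv : v ≠ 0) :
    v (argmaxAbs v) ≠ 0 := by
  obtain ⟨i, hi⟩ := Function.ne_iff.mp hv
  exact abs_pos.mp ((abs_pos.mpr hi).trans_le (abs_le_abs_argmaxAbs v i))

section DEIM

variable {n m : ℕ} [NeZero n] {u : ℕ → Fin n → ℝ}

theorem deimP_eq_argmaxAbs (u : ℕ → Fin n → ℝ) (j : ℕ) : deimP u j = argmaxAbs (deimRes u j) := by
  rw [deimP]
  rfl

theorem deimRes_ne_zero (hu : LinearIndependent ℝ fun l : Fin m => u l) {j : ℕ} (hj : j < m) :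
    deimRes u j ≠ 0 :=
  interpResidual_ne_zero _ (hu.comp (Fin.castLE hj) (Fin.castLE_injective hj))

theorem deimRes_deimP_ne_zero (hu : LinearIndependent ℝ fun l : Fin m => u l) {j : ℕ}
    (hj : j < m) : deimRes u j (deimP u j) ≠ 0 := by
  rw [deimP_eq_argmaxAbs]
  exact apply_argmaxAbs_ne_zero (deimRes_ne_zero hu hj)

theorem isUnit_interpMatrix_deimP (hu : LinearIndependent ℝ fun l : Fin m => u l) :
    ∀ j ≤ m, IsUnit (interpMatrix u (deimP u) j)
  | 0, _ => isUnit_of_subsingleton _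
  | j + 1, hj => by
    have hM := isUnit_interpMatrix_deimP hu j (by omega)
    rw [isUnit_iff_isUnit_det, det_interpMatrix_succ hM, isUnit_iff_ne_zero]
    exact mul_ne_zero ((isUnit_iff_isUnit_det _).mp hM).ne_zero (deimRes_deimP_ne_zero hu hj)

theorem deimP_injective (hu : LinearIndependent ℝ fun l : Fin m => u l) :
    Function.Injective fun i : Fin m => deimP u i := by
  refine Function.Injective.of_lt_imp_ne fun k j hkj hp => ?_
  have hM := isUnit_interpMatrix_deimP hu j j.isLt.le
  apply deimRes_deimP_ne_zero hu j.isLt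
  rw [← hp]
  exact interpResidual_apply_eq_zero hM ⟨k, hkj⟩

end DEIM

/-- The DEIM greedy algorithm is well defined for linearly independent inputs:
at each step the selected submatrix is invertible and the residual is nonzero;
consequently the selected indices are pairwise distinct. -/
theorem deim_greedy_well_defined {n m : ℕ} [NeZero n]
    (u : Fin m → Fin n → ℝ) (hu : LinearIndependent ℝ u) :
    letI uext : ℕ → Fin n → ℝ := fun j a => if h : j < m then u ⟨j, h⟩ a else 0
    (∀ j : ℕ, j < m →
      IsUnit (Matrix.of fun i k : Fin j => uext k.val (deimP uext i.val)) ∧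
      deimRes uext j ≠ 0) ∧
    Function.Injective fun i : Fin m => deimP uext i.val := by
  set uext : ℕ → Fin n → ℝ := fun j a => if h : j < m then u ⟨j, h⟩ a else 0
  have huext : LinearIndependent ℝ fun l : Fin m => uext l := by
    convert hu with l
    ext a
    simp [uext]
  exact ⟨fun j hj => ⟨isUnit_interpMatrix_deimP huext j hj.le, deimRes_ne_zero huext hj⟩,
    deimP_injective huext⟩
end

section
/- Let n, m be natural numbers with m < n and let U ∈ ℂ^{n×m} satisfy U*U = I_m. Then there exists a selection operator S such that SᵀU is invertible and ‖(SᵀU)⁻¹‖₂ ≤ √(n − m + 1) · √(4^m + 6m − 1)/3. -/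
/-!
Take the rows `p` of `U` that maximise `|det U_p|` (a maximal-volume submatrix; it is invertible
because `U` has full column rank). By Cramer's rule every entry of `U U_p⁻¹` is a quotient
`det U_q / det U_p`, so has modulus at most `1`; hence `‖U U_p⁻¹‖₂ ≤ ‖U U_p⁻¹‖_F ≤ √(nm)`.
Since `U` is an isometry, `‖U_p⁻¹‖₂ = ‖U U_p⁻¹‖₂`, and `9nm ≤ (n - m + 1)(4^m + 6m - 1)`
for `m < n`.
-/

open Matrix

/-- Euclidean norm of a vector. -/
noncomputable def evNorm {𝕜 : Type*} [RCLike 𝕜] {a : ℕ} (f : Fin a → 𝕜) : ℝ :=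
  Real.sqrt (∑ i, ‖f i‖ ^ 2)

/-- A selection operator: its columns are `m` distinct columns of the identity matrix. -/
def IsSelection {𝕜 : Type*} [RCLike 𝕜] {n m : ℕ} (S : Matrix (Fin n) (Fin m) 𝕜) : Prop :=
  ∃ p : Fin m → Fin n, Function.Injective p ∧
    S = Matrix.of fun j i => if j = p i then 1 else 0

namespace Matrix

theorem transpose_selection_mul {ι κ R : Type*} [Fintype ι] [DecidableEq ι] [Semiring R]
    (p : κ → ι) (U : Matrix ι κ R) :
    (of fun j i => if j = p i then (1 : R) else 0)ᵀ * U = U.submatrix p id := by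
  ext k l
  simp [mul_apply]

variable {ι κ K : Type*} [Fintype κ] [DecidableEq κ]

theorem vecMul_inv_apply [Field K] (A : Matrix κ κ K) (b : κ → K) (j : κ) :
    (b ᵥ* A⁻¹) j = (A.updateRow j b).det / A.det := by
  rw [inv_def, vecMul_smul, ← mulVec_transpose, adjugate_transpose, ← cramer_eq_adjugate_mulVec,
    Pi.smul_apply, cramer_transpose_apply, Ring.inverse_eq_inv', smul_eq_mul, div_eq_inv_mul]

theorem mul_inv_submatrix_apply [Field K] (U : Matrix ι κ K) (p : κ → ι) (i : ι) (j : κ) :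
    (U * (U.submatrix p id)⁻¹) i j =
      (U.submatrix (Function.update p j i) id).det / (U.submatrix p id).det := by
  have hrow : (U.submatrix p id).updateRow j (U i) = U.submatrix (Function.update p j i) id := by
    ext k l
    by_cases hk : k = j <;> simp [updateRow_apply, hk]
  rw [← hrow, ← vecMul_inv_apply]
  rfl

theorem exists_det_submatrix_ne_zero [Finite ι] [Field K] (U : Matrix ι κ K)
    (hU : U.rank = Fintype.card κ) : ∃ p : κ → ι, (U.submatrix p id).det ≠ 0 := by
  obtain ⟨s, a, ha, hspan, hli⟩ := exists_linearIndependent' K U.row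
  have : Finite s := Finite.of_injective a ha
  have : Fintype s := Fintype.ofFinite s
  have hcard : Fintype.card s = Fintype.card κ := by
    rw [← hU, rank_eq_finrank_span_row, ← hspan, finrank_span_eq_card hli]
  have e : κ ≃ s := (Fintype.equivOfCardEq hcard).symm
  refine ⟨a ∘ e, ?_⟩
  rw [← isUnit_iff_ne_zero, ← isUnit_iff_isUnit_det, ← linearIndependent_rows_iff_isUnit]
  exact hli.comp e e.injective

theorem injective_of_det_submatrix_ne_zero [CommRing K] {U : Matrix ι κ K} {p : κ → ι}
    (h : (U.submatrix p id).det ≠ 0) : Function.Injective p := by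
  intro k l hkl
  by_contra hne
  exact h (det_zero_of_row_eq hne (by ext; simp [hkl]))

theorem exists_max_norm_det_submatrix [Finite ι] [NormedField K] (U : Matrix ι κ K)
    (hU : U.rank = Fintype.card κ) :
    ∃ p : κ → ι, (U.submatrix p id).det ≠ 0 ∧
      ∀ q : κ → ι, ‖(U.submatrix q id).det‖ ≤ ‖(U.submatrix p id).det‖ := by
  obtain ⟨q, hq⟩ := exists_det_submatrix_ne_zero U hU
  have : Nonempty (κ → ι) := ⟨q⟩
  obtain ⟨p, hp⟩ := Finite.exists_max fun q : κ → ι => ‖(U.submatrix q id).det‖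
  exact ⟨p, norm_pos_iff.mp ((norm_pos_iff.mpr hq).trans_le (hp q)), hp⟩

theorem norm_mul_inv_submatrix_apply_le_one [NormedField K] {U : Matrix ι κ K}
    {p : κ → ι} (hp : ∀ q : κ → ι, ‖(U.submatrix q id).det‖ ≤ ‖(U.submatrix p id).det‖)
    (i : ι) (j : κ) : ‖(U * (U.submatrix p id)⁻¹) i j‖ ≤ 1 := by
  rw [mul_inv_submatrix_apply, norm_div]
  exact div_le_one_of_le₀ (hp _) (norm_nonneg _)

end Matrix

variable {𝕜 : Type*} [RCLike 𝕜] {a b c : ℕ}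

section L2

open scoped Matrix.Norms.L2Operator

theorem specNorm_eq_l2_opNorm (A : Matrix (Fin a) (Fin b) 𝕜) : specNorm A = ‖A‖ := rfl

theorem specNorm_mul_of_conjTranspose_mul_self_eq_one {U : Matrix (Fin a) (Fin b) 𝕜}
    (hU : Uᴴ * U = 1) (B : Matrix (Fin b) (Fin c) 𝕜) : specNorm (U * B) = specNorm B := by
  have hsq : ‖U * B‖ * ‖U * B‖ = ‖B‖ * ‖B‖ := by
    rw [← l2_opNorm_conjTranspose_mul_self, ← l2_opNorm_conjTranspose_mul_self, conjTranspose_mul,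
      Matrix.mul_assoc, ← Matrix.mul_assoc Uᴴ, hU, Matrix.one_mul]
  rw [specNorm_eq_l2_opNorm, specNorm_eq_l2_opNorm]
  exact (mul_self_inj (norm_nonneg _) (norm_nonneg _)).mp hsq

end L2

section Frobenius

attribute [local instance] Matrix.frobeniusNormedAddCommGroup

theorem specNorm_le_frobenius_norm (A : Matrix (Fin a) (Fin b) 𝕜) : specNorm A ≤ ‖A‖ := by
  refine ContinuousLinearMap.opNorm_le_bound _ (norm_nonneg _) fun x => ?_
  calc ‖toEuclideanLin A x‖ = ‖replicateCol Unit (A *ᵥ x.ofLp)‖ := by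
        rw [frobenius_norm_replicateCol]; rfl
    _ = ‖A * replicateCol Unit x.ofLp‖ := by rw [replicateCol_mulVec]
    _ ≤ ‖A‖ * ‖replicateCol Unit x.ofLp‖ := frobenius_norm_mul _ _
    _ = ‖A‖ * ‖x‖ := by rw [frobenius_norm_replicateCol]

theorem specNorm_le_sqrt_of_norm_apply_le_one {A : Matrix (Fin a) (Fin b) 𝕜}
    (hA : ∀ i j, ‖A i j‖ ≤ 1) : specNorm A ≤ √(a * b) := by
  refine (specNorm_le_frobenius_norm A).trans ?_
  rw [frobenius_norm_def, ← Real.sqrt_eq_rpow]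
  refine Real.sqrt_le_sqrt ?_
  calc ∑ i, ∑ j, ‖A i j‖ ^ (2 : ℝ) ≤ ∑ _i : Fin a, ∑ _j : Fin b, (1 : ℝ) := by
        gcongr with i _ j _
        exact Real.rpow_le_one (norm_nonneg _) (hA i j) zero_le_two
    _ = a * b := by simp

end Frobenius

theorem three_mul_add_one_le_four_pow (m : ℕ) : 3 * m + 1 ≤ 4 ^ m := by
  induction m with
  | zero => simp
  | succ k ih => rw [pow_succ]; omega

theorem nine_mul_sq_add_two_le (m : ℕ) : 9 * m ^ 2 + 2 ≤ 2 * 4 ^ m + 3 * m := by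
  induction m with
  | zero => simp
  | succ k ih => nlinarith [pow_succ 4 k, three_mul_add_one_le_four_pow k]

theorem nine_mul_le_mul_four_pow_of_lt {n m : ℕ} (hmn : m < n) :
    9 * (n : ℝ) * m ≤ ((n : ℝ) - m + 1) * ((4 : ℝ) ^ m + 6 * m - 1) := by
  have h₁ : 3 * (m : ℝ) + 1 ≤ 4 ^ m := by exact_mod_cast three_mul_add_one_le_four_pow m
  have h₂ : 9 * (m : ℝ) ^ 2 + 2 ≤ 2 * 4 ^ m + 3 * m := by exact_mod_cast nine_mul_sq_add_two_le m
  have h₃ : (m : ℝ) + 1 ≤ n := by exact_mod_cast hmn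
  nlinarith [mul_le_mul_of_nonneg_left h₃ (by linarith : (0 : ℝ) ≤ 4 ^ m - 3 * m - 1)]

theorem sqrt_mul_le_sqrt_mul_four_pow_of_lt {n m : ℕ} (hmn : m < n) :
    √((n : ℝ) * m) ≤ √((n : ℝ) - m + 1) * (√((4 : ℝ) ^ m + 6 * m - 1) / 3) := by
  have hnm : (0 : ℝ) ≤ n - m + 1 := by
    have : (m : ℝ) ≤ n := by exact_mod_cast hmn.le
    linarith
  rw [mul_div_assoc', le_div_iff₀ three_pos]
  calc √((n : ℝ) * m) * 3 = √(9 * (n : ℝ) * m) := by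
        rw [show (9 : ℝ) * n * m = 3 ^ 2 * (n * m) by ring,
          Real.sqrt_mul (by norm_num : (0 : ℝ) ≤ 3 ^ 2), Real.sqrt_sq zero_le_three, mul_comm]
    _ ≤ √(((n : ℝ) - m + 1) * ((4 : ℝ) ^ m + 6 * m - 1)) :=
        Real.sqrt_le_sqrt (nine_mul_le_mul_four_pow_of_lt hmn)
    _ = √((n : ℝ) - m + 1) * √((4 : ℝ) ^ m + 6 * m - 1) := Real.sqrt_mul hnm _

/-- There is a selection operator `S` with
`‖(SᵀU)⁻¹‖₂ ≤ √(n−m+1) · √(4^m+6m−1)/3`. -/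
theorem qdeim_selection_bound {n m : ℕ} (hmn : m < n)
    (U : Matrix (Fin n) (Fin m) ℂ) (hU : Uᴴ * U = 1) :
    ∃ S : Matrix (Fin n) (Fin m) ℂ, IsSelection S ∧ IsUnit (Sᵀ * U) ∧
      specNorm (Sᵀ * U)⁻¹ ≤
        Real.sqrt ((n : ℝ) - m + 1) * (Real.sqrt ((4 : ℝ) ^ m + 6 * m - 1) / 3) := by
  have hrank : U.rank = Fintype.card (Fin m) :=
    le_antisymm (rank_le_card_width U) (by simpa [hU] using rank_mul_le_right Uᴴ U)
  obtain ⟨p, hdet, hmax⟩ := exists_max_norm_det_submatrix U hrank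
  have hSU := transpose_selection_mul p U
  refine ⟨_, ⟨p, injective_of_det_submatrix_ne_zero hdet, rfl⟩, ?_, ?_⟩ <;> rw [hSU]
  · exact (isUnit_iff_isUnit_det _).mpr hdet.isUnit
  · rw [← specNorm_mul_of_conjTranspose_mul_self_eq_one hU]
    exact (specNorm_le_sqrt_of_norm_apply_le_one (norm_mul_inv_submatrix_apply_le_one hmax)).trans
      (sqrt_mul_le_sqrt_mul_four_pow_of_lt hmn)
end

section
/- Let m ≤ n and let W ∈ ℂ^{m×n}. Then there exist a permutation matrix Π ∈ ℝ^{n×n}, a unitary matrix Q ∈ ℂ^{m×m}, and an upper trapezoidal matrix R ∈ ℂ^{m×n} (i.e., R_{lk} = 0 for l > k) such that WΠ = QR and R satisfies the pivoting dominance property: |R_{ii}|² ≥ Σ_{l=i}^{min(k,m)} |R_{lk}|² for all 1 ≤ i ≤ m and all i ≤ k ≤ n. -/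
/-!
Induction on the number of rows, one Householder step at a time. Move a column of maximal
Euclidean norm to the front and apply a unitary `Q₀` that maps it to a multiple `r e₀` of the
first basis vector; factor the trailing block recursively and border the result. Since unitary
matrices preserve column norms, every column of `R` has norm at most that of the pivot column,
which is `|R₀₀|`: this is the dominance property in the first row, and the recursion gives it in
the others.
-/

open Matrix Finset

namespace Matrix

variable {α : Type*} {m n p : ℕ}

/-- The block matrix `!![a, r; c, M]` with a `1 × 1` upper left corner `a`. -/
def border (a : α) (r : Fin n → α) (c : Fin m → α) (M : Matrix (Fin m) (Fin n) α) :
    Matrix (Fin (m + 1)) (Fin (n + 1)) α :=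
  of (vecCons (vecCons a r) fun i => vecCons (c i) (M i))

section Entries

variable (a : α) (r : Fin n → α) (c : Fin m → α) (M : Matrix (Fin m) (Fin n) α)

@[simp] theorem border_zero_zero : border a r c M 0 0 = a := rfl

@[simp] theorem border_zero_succ (k : Fin n) : border a r c M 0 k.succ = r k := rfl

@[simp] theorem border_succ_zero (i : Fin m) : border a r c M i.succ 0 = c i := rfl

@[simp] theorem border_succ_succ (i : Fin m) (k : Fin n) :
    border a r c M i.succ k.succ = M i k :=
  rfl

theorem submatrix_id_decomposeFin_symm_zero_border (τ : Equiv.Perm (Fin n)) :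
    (border a r c M).submatrix id (Equiv.Perm.decomposeFin.symm (0, τ)) =
      border a (r ∘ τ) c (M.submatrix id τ) := by
  ext i k
  cases i using Fin.cases <;> cases k using Fin.cases <;> simp

theorem conjTranspose_border [Star α] :
    (border a r c M)ᴴ = border (star a) (star c) (star r) Mᴴ := by
  ext i k
  cases i using Fin.cases <;> cases k using Fin.cases <;> rfl

end Entries

theorem border_eta (A : Matrix (Fin (m + 1)) (Fin (n + 1)) α) :
    border (A 0 0) (fun k => A 0 k.succ) (fun i => A i.succ 0) (A.submatrix Fin.succ Fin.succ) =
      A := by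
  ext i k
  cases i using Fin.cases <;> cases k using Fin.cases <;> rfl

theorem border_one [Zero α] [One α] : border (1 : α) 0 0 (1 : Matrix (Fin m) (Fin m) α) = 1 := by
  ext i k
  cases i using Fin.cases <;> cases k using Fin.cases <;>
    simp [one_apply, Fin.succ_ne_zero, (Fin.succ_ne_zero _).symm]

theorem border_mul_border [NonUnitalNonAssocSemiring α] (a : α) (r : Fin n → α) (c : Fin m → α)
    (M : Matrix (Fin m) (Fin n) α) (a' : α) (r' : Fin p → α) (c' : Fin n → α)
    (M' : Matrix (Fin n) (Fin p) α) :
    border a r c M * border a' r' c' M' =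
      border (a * a' + r ⬝ᵥ c') (fun k => a * r' k + (r ᵥ* M') k)
        (fun i => c i * a' + (M *ᵥ c') i) (vecMulVec c r' + M * M') := by
  ext i k
  cases i using Fin.cases <;> cases k using Fin.cases <;>
    simp [mul_apply, Fin.sum_univ_succ, dotProduct, vecMul, mulVec, vecMulVec]

theorem border_one_mul_border [NonAssocSemiring α] (A : Matrix (Fin m) (Fin m) α) (a : α)
    (r : Fin n → α) (c : Fin m → α) (M : Matrix (Fin m) (Fin n) α) :
    border 1 0 0 A * border a r c M = border a r (A *ᵥ c) (A * M) := by
  simp [border_mul_border]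

def IsUpperTrapezoidal [Zero α] (R : Matrix (Fin m) (Fin n) α) : Prop :=
  ∀ (l : Fin m) (k : Fin n), (k : ℕ) < l → R l k = 0

def IsPivotDominant [Norm α] (hmn : m ≤ n) (R : Matrix (Fin m) (Fin n) α) : Prop :=
  ∀ (i : Fin m) (k : Fin n), (i : ℕ) ≤ k →
    ∑ l ∈ univ.filter fun l : Fin m => (i : ℕ) ≤ l ∧ (l : ℕ) ≤ k, ‖R l k‖ ^ 2 ≤
      ‖R i (Fin.castLE hmn i)‖ ^ 2

theorem IsUpperTrapezoidal.border [Zero α] {a : α} {r : Fin n → α}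
    {M : Matrix (Fin m) (Fin n) α} (hM : M.IsUpperTrapezoidal) :
    (border a r 0 M).IsUpperTrapezoidal := by
  intro l k hkl
  induction l using Fin.cases with
  | zero => exact absurd hkl (Nat.not_lt_zero _)
  | succ l =>
    induction k using Fin.cases with
    | zero => rfl
    | succ k => exact hM l k (by simpa using hkl)

theorem IsPivotDominant.of_submatrix_succ_succ [Norm α] (hmn : m ≤ n)
    {R : Matrix (Fin (m + 1)) (Fin (n + 1)) α} (hcol : ∀ k, ∑ l, ‖R l k‖ ^ 2 ≤ ‖R 0 0‖ ^ 2)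
    (hR : (R.submatrix Fin.succ Fin.succ).IsPivotDominant hmn) :
    R.IsPivotDominant (Nat.succ_le_succ hmn) := by
  intro i k hik
  induction i using Fin.cases with
  | zero =>
    exact (sum_le_sum_of_subset_of_nonneg (filter_subset _ _) fun _ _ _ => by positivity).trans
      (hcol k)
  | succ i =>
    induction k using Fin.cases with
    | zero => exact absurd hik (by simp)
    | succ k =>
      have hcast : Fin.castLE (Nat.succ_le_succ hmn) i.succ = (Fin.castLE hmn i).succ := rfl
      refine le_of_eq_of_le ?_ ((hR i k (by simpa using hik)).trans_eq (by rw [hcast]; rfl))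
      rw [sum_filter, sum_filter, Fin.sum_univ_succ, if_neg (by simp)]
      simp

end Matrix

theorem Equiv.Perm.decomposeFin_symm_eq_swap_mul {n : ℕ} (p : Fin (n + 1)) (e : Perm (Fin n)) :
    decomposeFin.symm (p, e) = swap 0 p * decomposeFin.symm (0, e) := by
  ext x
  cases x using Fin.cases <;> simp

section RCLike

variable {𝕜 : Type*} [RCLike 𝕜]

theorem Matrix.conjTranspose_mul_self_apply_self {κ ν : Type*} [Fintype κ]
    (A : Matrix κ ν 𝕜) (k : ν) : (Aᴴ * A) k k = ((∑ l, ‖A l k‖ ^ 2 : ℝ) : 𝕜) := by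
  simp [mul_apply, RCLike.star_def, RCLike.conj_mul]

theorem Matrix.sum_norm_sq_mul_apply_of_conjTranspose_mul_self_eq_one {ι κ ν : Type*}
    [Fintype ι] [Fintype κ] [DecidableEq ι] {Q : Matrix κ ι 𝕜} (hQ : Qᴴ * Q = 1)
    (M : Matrix ι ν 𝕜) (k : ν) : ∑ l, ‖(Q * M) l k‖ ^ 2 = ∑ l, ‖M l k‖ ^ 2 := by
  have h : ((Q * M)ᴴ * (Q * M)) k k = (Mᴴ * M) k k := by
    rw [conjTranspose_mul, Matrix.mul_assoc, ← Matrix.mul_assoc Qᴴ, hQ, Matrix.one_mul]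
  rw [conjTranspose_mul_self_apply_self, conjTranspose_mul_self_apply_self] at h
  exact_mod_cast h

theorem Matrix.exists_unitary_conjTranspose_mulVec_eq_single {ι : Type*} [Fintype ι]
    [DecidableEq ι] (v : ι → 𝕜) (i₀ : ι) :
    ∃ (Q : Matrix ι ι 𝕜) (r : 𝕜), Qᴴ * Q = 1 ∧ Qᴴ *ᵥ v = Pi.single i₀ r := by
  set x : EuclideanSpace 𝕜 ι := WithLp.toLp 2 v
  obtain hx | hx := eq_or_ne x 0
  · refine ⟨1, 0, by simp, ?_⟩
    have hv : v = 0 := by simpa [x] using hx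
    simp [hv]
  have hu : Orthonormal 𝕜 (({i₀} : Set ι).domRestrict fun _ => ‖x‖⁻¹ • x) := by
    refine ⟨fun _ => ?_, fun i j hij => absurd (Subsingleton.elim i j) hij⟩
    simp [norm_smul, hx]
  -- The columns of `Q` form an orthonormal basis whose `i₀`-th vector is `x / ‖x‖`.
  obtain ⟨b, hb⟩ := hu.exists_orthonormalBasis_extension_of_card_eq (by simp)
  have hxb : x = (‖x‖ : 𝕜) • b i₀ := by
    rw [hb i₀ rfl, ← RCLike.real_smul_eq_coe_smul, smul_smul,
      mul_inv_cancel₀ (by simpa using hx), one_smul]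
  refine ⟨(EuclideanSpace.basisFun ι 𝕜).toBasis.toMatrix b, ‖x‖, by simp, ?_⟩
  ext l
  have hl : (((EuclideanSpace.basisFun ι 𝕜).toBasis.toMatrix b)ᴴ *ᵥ v) l = inner 𝕜 (b l) x := by
    simp [mulVec, dotProduct, Module.Basis.toMatrix_apply,
      EuclideanSpace.inner_eq_star_dotProduct, x, mul_comm]
  rw [hl]
  nth_rw 1 [hxb]
  rw [inner_smul_real_right, orthonormal_iff_ite.mp b.orthonormal]
  by_cases h : l = i₀ <;> simp [h, RCLike.real_smul_eq_coe_mul]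

theorem exists_submatrix_eq_mul_upperTrapezoidal_pivotDominant {m n : ℕ} (hmn : m ≤ n)
    (W : Matrix (Fin m) (Fin n) 𝕜) :
    ∃ (τ : Equiv.Perm (Fin n)) (Q : Matrix (Fin m) (Fin m) 𝕜) (R : Matrix (Fin m) (Fin n) 𝕜),
      Qᴴ * Q = 1 ∧ R.IsUpperTrapezoidal ∧ W.submatrix id τ = Q * R ∧ R.IsPivotDominant hmn := by
  induction m generalizing n with
  | zero => exact ⟨1, 1, 0, by simp, fun l => l.elim0, by ext l; exact l.elim0, fun i => i.elim0⟩
  | succ m ih =>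
    obtain ⟨n, rfl⟩ : ∃ n', n = n' + 1 := Nat.exists_eq_add_one.mpr (by omega)
    obtain ⟨j, -, hj⟩ := univ.exists_max_image (fun k => ∑ l, ‖W l k‖ ^ 2) univ_nonempty
    obtain ⟨Q₀, r, hQ₀, hQ₀W⟩ := exists_unitary_conjTranspose_mulVec_eq_single (fun l => W l j) 0
    set B := Q₀ᴴ * W.submatrix id (Equiv.swap 0 j)
    obtain ⟨τ₁, Q₁, R₁, hQ₁, hR₁, hB₁, hdom₁⟩ :=
      ih (Nat.le_of_succ_le_succ hmn) (B.submatrix Fin.succ Fin.succ)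
    set τ := Equiv.Perm.decomposeFin.symm (j, τ₁)
    set Q := Q₀ * border 1 0 0 Q₁
    set R := border r (fun k => B 0 (τ₁ k).succ) 0 R₁
    have hQ : Qᴴ * Q = 1 := by
      rw [conjTranspose_mul, Matrix.mul_assoc, ← Matrix.mul_assoc Q₀ᴴ, hQ₀, Matrix.one_mul,
        conjTranspose_border, star_one, star_zero, border_one_mul_border, hQ₁, mulVec_zero,
        border_one]
    have hB : B = border r (fun k => B 0 k.succ) 0 (B.submatrix Fin.succ Fin.succ) := by
      have hB₀ (l) : B l 0 = (Pi.single 0 r : Fin (m + 1) → 𝕜) l := by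
        rw [← hQ₀W]
        simp [B, mul_apply, mulVec, dotProduct]
      conv_lhs => rw [← border_eta B]
      congr 1
      · simpa using hB₀ 0
      · ext i
        simpa using hB₀ i.succ
    have hWQR : W.submatrix id τ = Q * R :=
      calc W.submatrix id τ = (Q₀ * B).submatrix id (Equiv.Perm.decomposeFin.symm (0, τ₁)) := by
            rw [← Matrix.mul_assoc, mul_eq_one_comm.mp hQ₀, Matrix.one_mul, submatrix_submatrix,
              ← Equiv.Perm.coe_mul, ← Equiv.Perm.decomposeFin_symm_eq_swap_mul]
            rfl
        _ = Q₀ * B.submatrix id (Equiv.Perm.decomposeFin.symm (0, τ₁)) := rfl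
        _ = Q * R := by
            rw [hB, submatrix_id_decomposeFin_symm_zero_border, hB₁, Matrix.mul_assoc,
              border_one_mul_border, mulVec_zero]
            rfl
    have hnorm (k) : ∑ l, ‖R l k‖ ^ 2 = ∑ l, ‖W l (τ k)‖ ^ 2 := by
      rw [← sum_norm_sq_mul_apply_of_conjTranspose_mul_self_eq_one hQ R k, ← hWQR]
      rfl
    have hcol (k) : ∑ l, ‖R l k‖ ^ 2 ≤ ‖R 0 0‖ ^ 2 :=
      calc ∑ l, ‖R l k‖ ^ 2 = ∑ l, ‖W l (τ k)‖ ^ 2 := hnorm k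
        _ ≤ ∑ l, ‖W l j‖ ^ 2 := hj _ (mem_univ _)
        _ = ∑ l, ‖R l 0‖ ^ 2 := by simpa [τ] using (hnorm 0).symm
        _ = ‖R 0 0‖ ^ 2 := by simp [Fin.sum_univ_succ, R]
    exact ⟨τ, Q, R, hQ, hR₁.border, hWQR, .of_submatrix_succ_succ _ hcol hdom₁⟩

end RCLike

/-- Businger–Golub column-pivoted QR: `WΠ = QR` with `Q` unitary, `R` upper
trapezoidal satisfying the pivoting dominance property. -/
theorem column_pivoted_qr_exists {m n : ℕ} (hmn : m ≤ n) (W : Matrix (Fin m) (Fin n) ℂ) :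
    ∃ (σ : Equiv.Perm (Fin n)) (Q : Matrix (Fin m) (Fin m) ℂ) (R : Matrix (Fin m) (Fin n) ℂ),
      Qᴴ * Q = 1 ∧
      (∀ (l : Fin m) (k : Fin n), (k : ℕ) < (l : ℕ) → R l k = 0) ∧
      W * σ.permMatrix ℂ = Q * R ∧
      (∀ (i : Fin m) (k : Fin n), (i : ℕ) ≤ (k : ℕ) →
        ∑ l ∈ Finset.univ.filter fun l : Fin m => (i : ℕ) ≤ (l : ℕ) ∧ (l : ℕ) ≤ (k : ℕ),
            ‖R l k‖ ^ 2 ≤ ‖R i (Fin.castLE hmn i)‖ ^ 2) := by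
  obtain ⟨τ, Q, R, hQ, hR, hWQR, hdom⟩ :=
    exists_submatrix_eq_mul_upperTrapezoidal_pivotDominant hmn W
  refine ⟨τ.symm, Q, R, hQ, hR, ?_, hdom⟩
  rw [← hWQR, Equiv.Perm.permMatrix, PEquiv.mul_toMatrix_toPEquiv, Equiv.symm_symm]
end

section
/- Let T ∈ ℂ^{m×m} be upper triangular with nonzero diagonal entries, satisfying the dominance property |T_{ii}|² ≥ Σ_{l=i}^{k} |T_{lk}|² for all 1 ≤ i ≤ k ≤ m. Then the entries of T⁻¹ satisfy: (T⁻¹)_{ji} = 0 for j > i, |(T⁻¹)_{ii}| = 1/|T_{ii}| for all i, and |(T⁻¹)_{ji}| ≤ 2^{i−1−j}/|T_{ii}| for all 1 ≤ j ≤ i−1. -/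
/-!
Since `T⁻¹ T = 1` and both factors are upper triangular, for `j < i` we get
`(T⁻¹)ⱼᵢ Tᵢᵢ = -∑_{j ≤ k < i} (T⁻¹)ⱼₖ Tₖᵢ`. Dominance gives `|Tₖᵢ| ≤ |Tₖₖ|`, so the
quantities `aₖ = |(T⁻¹)ⱼₖ| |Tₖₖ|` satisfy `aⱼ = 1` and `aᵢ ≤ ∑_{j ≤ k < i} aₖ`: each partial
sum at most doubles the previous one, whence `aᵢ ≤ 2^{i-1-j}`.
-/

open Finset Matrix

theorem le_two_pow_of_le_sum_Ico {a : ℕ → ℝ} {j : ℕ} (hj : a j ≤ 1)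
    (h : ∀ i, j < i → a i ≤ ∑ k ∈ Ico j i, a k) {i : ℕ} (hji : j < i) :
    a i ≤ 2 ^ (i - 1 - j) := by
  have hsum : ∀ i, j + 1 ≤ i → ∑ k ∈ Ico j i, a k ≤ 2 ^ (i - 1 - j) := by
    intro i hi
    induction i, hi using Nat.le_induction with
    | base => simpa using hj
    | succ i hi ih =>
      have hexp : i + 1 - 1 - j = i - 1 - j + 1 := by omega
      calc ∑ k ∈ Ico j (i + 1), a k = ∑ k ∈ Ico j i, a k + a i := sum_Ico_succ_top (by omega) a
        _ ≤ 2 * ∑ k ∈ Ico j i, a k := by linarith [h i (by omega)]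
        _ ≤ 2 ^ (i + 1 - 1 - j) := by rw [hexp, pow_succ']; gcongr
  exact (h i hji).trans (hsum i hji)

namespace Matrix.IsUpperTriangular

variable {n : Type*} [Fintype n] [LinearOrder n]

theorem nonsing_inv {R : Type*} [CommRing R] {A : Matrix n n R}
    (hA : A.IsUpperTriangular) : A⁻¹.IsUpperTriangular := by
  by_cases hdet : IsUnit A.det
  · let := A.invertibleOfIsUnitDet hdet
    exact blockTriangular_inv_of_blockTriangular hA
  · rw [nonsing_inv_apply_not_isUnit A hdet]
    exact blockTriangular_zero

theorem isUnit_det {K : Type*} [Field K] {T : Matrix n n K}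
    (hT : T.IsUpperTriangular) (hdiag : ∀ i, T i i ≠ 0) : IsUnit T.det := by
  rw [det_of_isUpperTriangular hT]
  exact (prod_ne_zero_iff.2 fun i _ => hdiag i).isUnit

variable [LocallyFiniteOrder n]

theorem mul_apply_eq_sum_Icc {R : Type*} [NonUnitalNonAssocSemiring R]
    {A B : Matrix n n R} (hA : A.IsUpperTriangular) (hB : B.IsUpperTriangular) (j i : n) :
    (A * B) j i = ∑ k ∈ Icc j i, A j k * B k i := by
  rw [mul_apply]
  refine (sum_subset (subset_univ _) fun k _ hk => ?_).symm
  rcases lt_or_ge k j with hkj | hjk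
  · rw [hA hkj, zero_mul]
  · rw [hB (lt_of_not_ge fun hki => hk (mem_Icc.2 ⟨hjk, hki⟩)), mul_zero]

section Field

variable {K : Type*} [Field K] {T : Matrix n n K}

theorem inv_apply_mul_add_sum_Ico (hT : T.IsUpperTriangular)
    (hdiag : ∀ i, T i i ≠ 0) {j i : n} (hji : j ≤ i) :
    T⁻¹ j i * T i i + ∑ k ∈ Ico j i, T⁻¹ j k * T k i = (1 : Matrix n n K) j i := by
  rw [← nonsing_inv_mul T (hT.isUnit_det hdiag),
    hT.nonsing_inv.mul_apply_eq_sum_Icc hT, Icc_eq_cons_Ico hji, sum_cons]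

theorem inv_apply_self (hT : T.IsUpperTriangular)
    (hdiag : ∀ i, T i i ≠ 0) (i : n) : T⁻¹ i i = (T i i)⁻¹ :=
  eq_inv_of_mul_eq_one_left <| by simpa using hT.inv_apply_mul_add_sum_Ico hdiag (le_refl i)

end Field

variable {K : Type*} [NormedField K]

theorem norm_inv_apply_mul_le_sum {T : Matrix n n K} (hT : T.IsUpperTriangular)
    (hdiag : ∀ i, T i i ≠ 0)
    (hrow : ∀ k i, k < i → ‖T k i‖ ≤ ‖T k k‖) {j i : n} (hji : j < i) :
    ‖T⁻¹ j i‖ * ‖T i i‖ ≤ ∑ k ∈ Ico j i, ‖T⁻¹ j k‖ * ‖T k k‖ := by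
  have h := hT.inv_apply_mul_add_sum_Ico hdiag hji.le
  rw [one_apply_ne hji.ne, add_eq_zero_iff_eq_neg] at h
  calc ‖T⁻¹ j i‖ * ‖T i i‖ = ‖∑ k ∈ Ico j i, T⁻¹ j k * T k i‖ := by rw [← norm_mul, h, norm_neg]
    _ ≤ ∑ k ∈ Ico j i, ‖T⁻¹ j k‖ * ‖T k i‖ := by
      simpa only [norm_mul] using norm_sum_le (Ico j i) fun k => T⁻¹ j k * T k i
    _ ≤ ∑ k ∈ Ico j i, ‖T⁻¹ j k‖ * ‖T k k‖ :=
      sum_le_sum fun k hk => by gcongr; exact hrow k i (mem_Ico.1 hk).2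

theorem norm_inv_apply_mul_le_two_pow {m : ℕ} {T : Matrix (Fin m) (Fin m) K}
    (hT : T.IsUpperTriangular) (hdiag : ∀ i, T i i ≠ 0)
    (hrow : ∀ k i, k < i → ‖T k i‖ ≤ ‖T k k‖) {j i : Fin m} (hji : j < i) :
    ‖T⁻¹ j i‖ * ‖T i i‖ ≤ 2 ^ ((i : ℕ) - 1 - j) := by
  set c : Fin m → ℝ := fun k => ‖T⁻¹ j k‖ * ‖T k k‖
  -- `c` extended by zero to `ℕ`, where `le_two_pow_of_le_sum_Ico` applies
  set a : ℕ → ℝ := fun k => if h : k < m then c ⟨k, h⟩ else 0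
  have ha : ∀ k : Fin m, a k = c k := fun k => dif_pos k.isLt
  have hsum : ∀ i : Fin m, ∑ k ∈ Ico j i, c k = ∑ k ∈ Ico (j : ℕ) i, a k := fun i => by
    rw [← Fin.map_valEmbedding_Ico, sum_map]
    exact sum_congr rfl fun k _ => (ha k).symm
  have hrec : ∀ i : ℕ, (j : ℕ) < i → a i ≤ ∑ k ∈ Ico (j : ℕ) i, a k := fun i hji => by
    by_cases hi : i < m
    · rw [← hsum ⟨i, hi⟩, ha ⟨i, hi⟩]
      exact norm_inv_apply_mul_le_sum hT hdiag hrow hji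
    · rw [show a i = 0 from dif_neg hi]
      exact sum_nonneg fun k _ => by simp only [a, c]; split <;> positivity
  have hj : a j ≤ 1 := by
    rw [ha, show c j = ‖T⁻¹ j j‖ * ‖T j j‖ from rfl, hT.inv_apply_self hdiag, norm_inv,
      inv_mul_cancel₀ (norm_ne_zero_iff.2 (hdiag j))]
  simpa only [ha] using le_two_pow_of_le_sum_Ico hj hrec hji

end Matrix.IsUpperTriangular

/-- Entrywise bounds on the inverse of an upper triangular matrix with the
column dominance property: `(T⁻¹)_{ji} = 0` for `j > i`,
`|(T⁻¹)_{ii}| = 1/|T_{ii}|`, and `|(T⁻¹)_{ji}| ≤ 2^{i−1−j}/|T_{ii}|` for `j < i`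
(indices written 0-based, so the exponent is `i − 1 − j` in 0-based form). -/
theorem inv_triangular_dominance_entry_bounds {m : ℕ} (T : Matrix (Fin m) (Fin m) ℂ)
    (htri : ∀ l k : Fin m, (k : ℕ) < (l : ℕ) → T l k = 0)
    (hdiag : ∀ i : Fin m, T i i ≠ 0)
    (hdom : ∀ i k : Fin m, (i : ℕ) ≤ (k : ℕ) →
      ∑ l ∈ Finset.univ.filter fun l : Fin m => (i : ℕ) ≤ (l : ℕ) ∧ (l : ℕ) ≤ (k : ℕ),
          ‖T l k‖ ^ 2 ≤ ‖T i i‖ ^ 2) :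
    (∀ j i : Fin m, (i : ℕ) < (j : ℕ) → T⁻¹ j i = 0) ∧
    (∀ i : Fin m, ‖T⁻¹ i i‖ = 1 / ‖T i i‖) ∧
    (∀ j i : Fin m, (j : ℕ) < (i : ℕ) →
      ‖T⁻¹ j i‖ ≤ 2 ^ ((i : ℕ) - 1 - (j : ℕ)) / ‖T i i‖) := by
  have hT : T.IsUpperTriangular := fun l k h => htri l k h
  have hrow : ∀ k i : Fin m, k < i → ‖T k i‖ ≤ ‖T k k‖ := fun k i hki => by
    have hk : k ∈ univ.filter fun l : Fin m => (k : ℕ) ≤ l ∧ (l : ℕ) ≤ i := by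
      simp only [mem_filter, mem_univ, true_and]
      exact ⟨le_rfl, hki.le⟩
    have hsq := (single_le_sum (f := fun l => ‖T l i‖ ^ 2) (fun _ _ => by positivity) hk).trans
      (hdom k i hki.le)
    exact (pow_le_pow_iff_left₀ (norm_nonneg _) (norm_nonneg _) two_ne_zero).1 hsq
  refine ⟨fun j i hij => hT.nonsing_inv hij, fun i => ?_, fun j i hji => ?_⟩
  · rw [hT.inv_apply_self hdiag, norm_inv, one_div]
  · rw [le_div_iff₀ (norm_pos_iff.2 (hdiag i))]
    exact hT.norm_inv_apply_mul_le_two_pow hdiag hrow hji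
end

section
/- Let T ∈ ℂ^{m×m} be upper triangular with nonzero diagonal entries, satisfying the dominance property |T_{ii}|² ≥ Σ_{l=i}^{k} |T_{lk}|² for all 1 ≤ i ≤ k ≤ m, and let D = diag(T_{11}, …, T_{mm}). Then the row-scaled matrix T̆ = D⁻¹T satisfies ‖T̆⁻¹‖_F ≤ √(4^m + 6m − 1)/3, where ‖·‖_F denotes the Frobenius norm. -/
/-! By dominance, `|T i j| ≤ |T i i|` for `i ≤ j`, so `B = D⁻¹T` is unit upper triangular
with entries of modulus at most one. Reading `B * B⁻¹ = 1` along row `i` gives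
`B⁻¹ i k = -∑_{i<l≤k} B i l * B⁻¹ l k`, hence by induction on `k - i` the bound
`|B⁻¹ i k| ≤ 2^(k-i-1)` for `i < k`: these bounds satisfy
`2^(k-i-1) = 1 + ∑_{i<l<k} 2^(k-l-1)`. Summing the squares `4^(k-i-1)` column by column gives
`‖B⁻¹‖_F² ≤ (4^m + 6m - 1)/9`. -/

open Matrix

noncomputable def frobNorm {a b : ℕ} (A : Matrix (Fin a) (Fin b) ℂ) : ℝ :=
  Real.sqrt (∑ i, ∑ j, ‖A i j‖ ^ 2)

open Finset

theorem Finset.sum_Icc_reflect {M : Type*} [AddCommMonoid M] (f : ℕ → M) (i k : ℕ) :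
    ∑ l ∈ Icc i k, f (k - l) = ∑ j ∈ range (k + 1 - i), f j := by
  rw [← Ico_add_one_right_eq_Icc, sum_Ico_reflect f i le_rfl, Nat.sub_self, range_eq_Ico]

theorem sum_range_succ_pow_sub_one {R : Type*} [Semiring R] (a : R) (n : ℕ) :
    ∑ j ∈ range (n + 1), a ^ (j - 1) = 1 + ∑ j ∈ range n, a ^ j := by
  rw [sum_range_succ', add_comm]
  simp

theorem sum_Ioc_two_pow_sub_sub_one {i k : ℕ} (hik : i < k) :
    ∑ l ∈ Ioc i k, (2 : ℝ) ^ (k - l - 1) = 2 ^ (k - i - 1) := by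
  obtain ⟨d, rfl⟩ : ∃ d, k = i + 1 + d := ⟨k - (i + 1), by omega⟩
  rw [← Icc_add_one_left_eq_Ioc, sum_Icc_reflect (fun j => (2 : ℝ) ^ (j - 1)),
    show i + 1 + d + 1 - (i + 1) = d + 1 by omega, sum_range_succ_pow_sub_one,
    geom_sum_eq (by norm_num), show i + 1 + d - i - 1 = d by omega]
  ring

theorem sum_Iic_four_pow_sub_sub_one (k : ℕ) :
    ∑ i ∈ Iic k, (4 : ℝ) ^ (k - i - 1) = 1 + ((4 : ℝ) ^ k - 1) / 3 := by
  rw [← Icc_bot, sum_Icc_reflect (fun j => (4 : ℝ) ^ (j - 1)), Nat.bot_eq_zero, Nat.sub_zero,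
    sum_range_succ_pow_sub_one, geom_sum_eq (by norm_num)]
  norm_num

namespace Matrix

theorem inv_diagonal_mul_apply {n K : Type*} [Fintype n] [DecidableEq n] [Field K]
    {d : n → K} (hd : ∀ i, d i ≠ 0) (T : Matrix n n K) (i j : n) :
    ((diagonal d)⁻¹ * T) i j = T i j / d i := by
  rw [inv_eq_right_inv (B := diagonal d⁻¹) (by simp [hd]), diagonal_mul, Pi.inv_apply,
    inv_mul_eq_div]

variable {n R : Type*} [Fintype n] [LinearOrder n]

theorem IsUpperTriangular.mul_apply_eq_sum_Icc_s12 [LocallyFiniteOrder n]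
    [NonUnitalNonAssocSemiring R] {B S : Matrix n n R} (hB : B.IsUpperTriangular)
    (hS : S.IsUpperTriangular) (i k : n) :
    (B * S) i k = ∑ l ∈ Icc i k, B i l * S l k := by
  rw [mul_apply]
  refine (sum_subset (subset_univ _) fun l _ hl => ?_).symm
  rcases lt_or_ge l i with hli | hil
  · rw [hB hli, zero_mul]
  · rw [hS (lt_of_not_ge fun hlk => hl (mem_Icc.2 ⟨hil, hlk⟩)), mul_zero]

variable [DecidableEq n] [CommRing R] {B : Matrix n n R}

theorem IsUpperTriangular.det_eq_one (hB : B.IsUpperTriangular) (hB1 : ∀ i, B i i = 1) :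
    B.det = 1 := by
  simp [det_of_isUpperTriangular hB, hB1]

theorem IsUpperTriangular.inv (hB : B.IsUpperTriangular) (hB1 : ∀ i, B i i = 1) :
    B⁻¹.IsUpperTriangular :=
  letI := invertibleOfIsUnitDet B (hB.det_eq_one hB1 ▸ isUnit_one)
  blockTriangular_inv_of_blockTriangular hB

variable [LocallyFiniteOrder n]

theorem IsUpperTriangular.inv_apply_self_s12 (hB : B.IsUpperTriangular) (hB1 : ∀ i, B i i = 1)
    (i : n) : B⁻¹ i i = 1 := by
  have h := hB.mul_apply_eq_sum_Icc_s12 (hB.inv hB1) i i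
  rwa [mul_nonsing_inv B (by simp [hB.det_eq_one hB1]), Icc_self, sum_singleton, hB1, one_mul,
    one_apply_eq, eq_comm] at h

theorem IsUpperTriangular.inv_apply_of_lt (hB : B.IsUpperTriangular) (hB1 : ∀ i, B i i = 1)
    {i k : n} (hik : i < k) :
    B⁻¹ i k = -∑ l ∈ Ioc i k, B i l * B⁻¹ l k := by
  have h := hB.mul_apply_eq_sum_Icc_s12 (hB.inv hB1) i k
  rw [mul_nonsing_inv B (by simp [hB.det_eq_one hB1]), Icc_eq_cons_Ioc hik.le, sum_cons, hB1,
    one_mul, one_apply_ne hik.ne] at h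
  exact eq_neg_of_add_eq_zero_left h.symm

section Fin

variable {𝕜 : Type*} [NormedField 𝕜] {m : ℕ}

/-- At `i = k` the truncated exponent `k - i - 1` makes the bound `1`. -/
theorem norm_inv_apply_le_two_pow {B : Matrix (Fin m) (Fin m) 𝕜} (hB : B.IsUpperTriangular)
    (hB1 : ∀ i, B i i = 1) (hnorm : ∀ i j, ‖B i j‖ ≤ 1) {i k : Fin m} (hik : i ≤ k) :
    ‖B⁻¹ i k‖ ≤ 2 ^ ((k : ℕ) - i - 1) := by
  induction hd : (k : ℕ) - i using Nat.strong_induction_on generalizing i with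
  | _ d ih =>
    rcases hik.lt_or_eq with hik | rfl
    · rw [hB.inv_apply_of_lt hB1 hik, norm_neg, ← hd]
      calc ‖∑ l ∈ Ioc i k, B i l * B⁻¹ l k‖
          ≤ ∑ l ∈ Ioc i k, (2 : ℝ) ^ ((k : ℕ) - l - 1) := by
            refine (norm_sum_le _ _).trans (sum_le_sum fun l hl => ?_)
            obtain ⟨hil, hlk⟩ := mem_Ioc.1 hl
            calc ‖B i l * B⁻¹ l k‖ ≤ ‖B i l‖ * ‖B⁻¹ l k‖ := norm_mul_le _ _
              _ ≤ 1 * 2 ^ ((k : ℕ) - l - 1) :=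
                  mul_le_mul (hnorm i l) (ih _ (by omega) hlk rfl) (norm_nonneg _) zero_le_one
              _ = _ := one_mul _
        _ = ∑ l ∈ Ioc (i : ℕ) k, (2 : ℝ) ^ ((k : ℕ) - l - 1) := by
            rw [← Fin.map_valEmbedding_Ioc, sum_map]
            rfl
        _ = 2 ^ ((k : ℕ) - i - 1) := sum_Ioc_two_pow_sub_sub_one hik
    · simp [hB.inv_apply_self_s12 hB1, ← hd]

theorem sum_sum_norm_sq_le_of_norm_le_two_pow {S : Matrix (Fin m) (Fin m) 𝕜}
    (hS : S.IsUpperTriangular)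
    (hbound : ∀ i k, i ≤ k → ‖S i k‖ ≤ 2 ^ ((k : ℕ) - i - 1)) :
    ∑ i, ∑ k, ‖S i k‖ ^ 2 ≤ ((4 : ℝ) ^ m + 6 * m - 1) / 9 := by
  rw [sum_comm]
  calc ∑ k, ∑ i, ‖S i k‖ ^ 2 = ∑ k : Fin m, ∑ i ∈ Iic k, ‖S i k‖ ^ 2 := by
        refine sum_congr rfl fun k _ => (sum_subset (subset_univ _) fun i _ hi => ?_).symm
        rw [hS (not_le.1 (mt mem_Iic.2 hi)), norm_zero, zero_pow two_ne_zero]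
    _ ≤ ∑ k : Fin m, ∑ i ∈ Iic k, (4 : ℝ) ^ ((k : ℕ) - i - 1) := by
        gcongr with k _ i hi
        calc ‖S i k‖ ^ 2 ≤ ((2 : ℝ) ^ ((k : ℕ) - i - 1)) ^ 2 := by
              gcongr
              exact hbound i k (mem_Iic.1 hi)
          _ = _ := by rw [← pow_mul, mul_comm, pow_mul]; norm_num
    _ = ∑ k : Fin m, (1 + ((4 : ℝ) ^ (k : ℕ) - 1) / 3) := by
        refine sum_congr rfl fun k _ => ?_
        rw [← sum_Iic_four_pow_sub_sub_one, ← Fin.map_valEmbedding_Iic, sum_map]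
        rfl
    _ = ((4 : ℝ) ^ m + 6 * m - 1) / 9 := by
        rw [Fin.sum_univ_eq_sum_range (fun k => 1 + ((4 : ℝ) ^ k - 1) / 3), sum_add_distrib,
          ← sum_div, sum_sub_distrib, geom_sum_eq (by norm_num)]
        simp only [sum_const, card_range, nsmul_eq_mul, mul_one]
        ring

end Fin

end Matrix

/-- For upper triangular `T` with the column dominance property and
`D = diag(T₁₁,…,T_mm)`, the row-scaled matrix `T̆ = D⁻¹T` satisfies
`‖T̆⁻¹‖_F ≤ √(4^m+6m−1)/3`. -/
theorem scaled_inv_triangular_frobenius_bound {m : ℕ} (T : Matrix (Fin m) (Fin m) ℂ)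
    (htri : ∀ l k : Fin m, (k : ℕ) < (l : ℕ) → T l k = 0)
    (hdiag : ∀ i : Fin m, T i i ≠ 0)
    (hdom : ∀ i k : Fin m, (i : ℕ) ≤ (k : ℕ) →
      ∑ l ∈ Finset.univ.filter fun l : Fin m => (i : ℕ) ≤ (l : ℕ) ∧ (l : ℕ) ≤ (k : ℕ),
          ‖T l k‖ ^ 2 ≤ ‖T i i‖ ^ 2) :
    frobNorm ((Matrix.diagonal fun i => T i i)⁻¹ * T)⁻¹ ≤
      Real.sqrt ((4 : ℝ) ^ m + 6 * m - 1) / 3 := by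
  set B := (diagonal fun i => T i i)⁻¹ * T
  have hB : ∀ i j, B i j = T i j / T i i := inv_diagonal_mul_apply hdiag T
  have hBtri : B.IsUpperTriangular := fun i j hij => by rw [hB, htri i j hij, zero_div]
  have hB1 : ∀ i, B i i = 1 := fun i => by rw [hB, div_self (hdiag i)]
  have hrow : ∀ i j : Fin m, i ≤ j → ‖T i j‖ ≤ ‖T i i‖ := fun i j hij =>
    (pow_le_pow_iff_left₀ (norm_nonneg _) (norm_nonneg _) two_ne_zero).1 <|
      (single_le_sum (fun l _ => sq_nonneg ‖T l j‖) (by simp [hij])).trans (hdom i j hij)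
  have hnorm : ∀ i j, ‖B i j‖ ≤ 1 := fun i j => by
    rcases lt_or_ge j i with hji | hij
    · rw [hBtri hji, norm_zero]
      exact zero_le_one
    · rw [hB, norm_div]
      exact div_le_one_of_le₀ (hrow i j hij) (norm_nonneg _)
  calc frobNorm B⁻¹ ≤ √(((4 : ℝ) ^ m + 6 * m - 1) / 9) :=
        Real.sqrt_le_sqrt <| sum_sum_norm_sq_le_of_norm_le_two_pow (hBtri.inv hB1) fun i k hik =>
          norm_inv_apply_le_two_pow hBtri hB1 hnorm hik
    _ = √((4 : ℝ) ^ m + 6 * m - 1) / 3 := by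
        rw [Real.sqrt_div' _ (by norm_num), show (9 : ℝ) = 3 ^ 2 by norm_num,
          Real.sqrt_sq zero_le_three]
end

section
/- Let R ∈ ℂ^{m×n} (m ≤ n) be upper trapezoidal (R_{lk} = 0 for l > k) and let T = R(1:m, 1:m) be its leading m×m block. (i) If T satisfies the dominance property |T_{ii}|² ≥ Σ_{l=i}^{k} |T_{lk}|² for all 1 ≤ i ≤ k ≤ m, then |T_{ii}| ≥ |T_{mm}| for every i, so min_{i=1,…,m} |T_{ii}| = |T_{mm}|. (ii) If moreover RR* = I_m and |R_{mm}| = max_{m ≤ j ≤ n} |R_{mj}|, then |T_{mm}| ≥ 1/√(n − m + 1). -/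
/-!
(i) `T_{mm}` is one of the summands in the dominance inequality for column `m` and row `i`,
so `|T_{mm}|² ≤ |T_{ii}|²`.
(ii) The last row of `R` is a unit vector, and by trapezoidality it is supported on the
`n - m + 1` entries `R_{mj}`, `j ≥ m`, each of modulus at most `|T_{mm}|`; hence
`1 ≤ (n - m + 1) |T_{mm}|²`.
-/

open Matrix Finset

lemma norm_le_of_sum_sq_norm_le {ι E : Type*} [SeminormedAddGroup E] {s : Finset ι}
    {v : ι → E} {a : ℝ} {k : ι} (ha : 0 ≤ a) (hk : k ∈ s)
    (h : ∑ l ∈ s, ‖v l‖ ^ 2 ≤ a ^ 2) : ‖v k‖ ≤ a :=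
  (pow_le_pow_iff_left₀ (norm_nonneg _) ha two_ne_zero).1 <|
    (single_le_sum (f := fun l => ‖v l‖ ^ 2) (fun _ _ => by positivity) hk).trans h

lemma one_le_card_mul_sq_of_sum_sq_norm_eq_one {ι E : Type*} [SeminormedAddGroup E]
    {s : Finset ι} {v : ι → E} {t : ℝ} (hv : ∑ j ∈ s, ‖v j‖ ^ 2 = 1)
    (ht : ∀ j ∈ s, ‖v j‖ ≤ t) : 1 ≤ #s * t ^ 2 := by
  rw [← hv, ← nsmul_eq_mul]
  exact sum_le_card_nsmul _ _ _ fun j hj => pow_le_pow_left₀ (norm_nonneg _) (ht j hj) 2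

lemma one_div_sqrt_le_of_one_le_mul_sq {c t : ℝ} (ht : 0 ≤ t) (h : 1 ≤ c * t ^ 2) :
    1 / √c ≤ t := by
  have hc : 0 < c := pos_of_mul_pos_left (one_pos.trans_le h) (sq_nonneg t)
  rw [one_div, ← Real.sqrt_inv, Real.sqrt_le_left ht, inv_le_iff_one_le_mul₀ hc, mul_comm]
  exact h

lemma Finset.sum_Ici_eq_sum_of_eq_zero {ι M : Type*} [Fintype ι] [LinearOrder ι]
    [LocallyFiniteOrderTop ι] [AddCommMonoid M] {f : ι → M} {a : ι}
    (hf : ∀ j < a, f j = 0) : ∑ j ∈ Ici a, f j = ∑ j, f j :=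
  sum_subset (subset_univ _) fun j _ hj => hf j (by simpa using hj)

lemma Matrix.sum_sq_norm_row_eq_one_of_mul_conjTranspose_eq_one {m n 𝕜 : Type*}
    [Fintype n] [DecidableEq m] [RCLike 𝕜] {R : Matrix m n 𝕜} (h : R * Rᴴ = 1) (i : m) :
    ∑ j, ‖R i j‖ ^ 2 = 1 := by
  have hii := congrFun (congrFun h i) i
  simp only [mul_apply, conjTranspose_apply, RCLike.star_def, RCLike.mul_conj,
    one_apply_eq] at hii
  exact_mod_cast hii

theorem trapezoidal_last_diagonal_bounds_general {m n : ℕ} (hmn : m ≤ n)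
    (R : Matrix (Fin m) (Fin n) ℂ)
    (htrap : ∀ (l : Fin m) (k : Fin n), (k : ℕ) < (l : ℕ) → R l k = 0)
    (T : Matrix (Fin m) (Fin m) ℂ)
    (mlast : Fin m) (hml : (mlast : ℕ) = m - 1) :
    ((∀ i k : Fin m, (i : ℕ) ≤ (k : ℕ) →
        ∑ l ∈ Finset.univ.filter fun l : Fin m => (i : ℕ) ≤ (l : ℕ) ∧ (l : ℕ) ≤ (k : ℕ),
            ‖T l k‖ ^ 2 ≤ ‖T i i‖ ^ 2) →
      ∀ i : Fin m, ‖T mlast mlast‖ ≤ ‖T i i‖) ∧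
    (R * Rᴴ = 1 →
      (∀ j : Fin n, m - 1 ≤ (j : ℕ) → ‖R mlast j‖ ≤ ‖T mlast mlast‖) →
      1 / Real.sqrt ((n : ℝ) - m + 1) ≤ ‖T mlast mlast‖) := by
  constructor
  · intro hdom i
    have hi : i ≤ mlast := Fin.le_def.2 (by omega)
    exact norm_le_of_sum_sq_norm_le (v := fun l => T l mlast) (norm_nonneg _) (by simp [hi])
      (hdom i mlast hi)
  · intro horth hmax
    let a : Fin n := ⟨m - 1, by omega⟩
    have ha : (a : ℕ) = m - 1 := rfl
    have hrow : ∑ j ∈ Ici a, ‖R mlast j‖ ^ 2 = 1 := by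
      have hzero : ∀ j < a, ‖R mlast j‖ ^ 2 = 0 := fun j hj => by
        rw [Fin.lt_def] at hj
        simp [htrap mlast j (by omega)]
      rw [sum_Ici_eq_sum_of_eq_zero hzero]
      exact sum_sq_norm_row_eq_one_of_mul_conjTranspose_eq_one horth mlast
    have hcard : (#(Ici a) : ℝ) = n - m + 1 := by
      rw [Fin.card_Ici, show n - (m - 1) = n - m + 1 by omega]
      push_cast [Nat.cast_sub hmn]
      ring
    refine one_div_sqrt_le_of_one_le_mul_sq (norm_nonneg _) ?_
    rw [← hcard]
    exact one_le_card_mul_sq_of_sum_sq_norm_eq_one hrow fun j hj =>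
      hmax j (by rwa [mem_Ici, Fin.le_def, ha] at hj)

/-- For an upper trapezoidal `R` with leading block `T`:
(i) if `T` has the dominance property then the smallest `|T_{ii}|` is `|T_{mm}|`;
(ii) if moreover the rows of `R` are orthonormal and `|R_{mm}|` is the largest
entry in the trailing part of the last row, then `|T_{mm}| ≥ 1/√(n−m+1)`. -/
theorem trapezoidal_last_diagonal_bounds {m n : ℕ} (hmn : m ≤ n) (hm : 0 < m)
    (R : Matrix (Fin m) (Fin n) ℂ)
    (htrap : ∀ (l : Fin m) (k : Fin n), (k : ℕ) < (l : ℕ) → R l k = 0)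
    (T : Matrix (Fin m) (Fin m) ℂ) (hT : T = Matrix.of fun i j => R i (Fin.castLE hmn j))
    (mlast : Fin m) (hml : (mlast : ℕ) = m - 1) :
    ((∀ i k : Fin m, (i : ℕ) ≤ (k : ℕ) →
        ∑ l ∈ Finset.univ.filter fun l : Fin m => (i : ℕ) ≤ (l : ℕ) ∧ (l : ℕ) ≤ (k : ℕ),
            ‖T l k‖ ^ 2 ≤ ‖T i i‖ ^ 2) →
      ∀ i : Fin m, ‖T mlast mlast‖ ≤ ‖T i i‖) ∧
    (R * Rᴴ = 1 →
      (∀ j : Fin n, m - 1 ≤ (j : ℕ) → ‖R mlast j‖ ≤ ‖T mlast mlast‖) →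
      1 / Real.sqrt ((n : ℝ) - m + 1) ≤ ‖T mlast mlast‖) :=
  trapezoidal_last_diagonal_bounds_general hmn R htrap T mlast hml
end

section
/- Let W ∈ ℂ^{m×n} and suppose W = Q · [[R₁₁, R₁₂], [0, R₂₂]], where Q ∈ ℂ^{m×m} is unitary, R₁₁ ∈ ℂ^{k×k} is invertible, R₁₂ ∈ ℂ^{k×(n−k)}, and R₂₂ ∈ ℂ^{(m−k)×(n−k)}. Partition the Gram matrix H = W*W conformally as H = [[H₁₁, H₁₂], [H₂₁, H₂₂]] with H₁₁ ∈ ℂ^{k×k}. Then R₂₂*R₂₂ equals the Schur complement of H₁₁ in H: R₂₂*R₂₂ = H₂₂ − H₂₁H₁₁⁻¹H₁₂. In particular, the Gram matrix of the trailing block after k steps of Householder QR depends on W only through H = W*W, so QR with column pivoting on W and on Ω*W (Ω unitary) selects the same columns. -/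
/-!
Left multiplication by an isometry `Q` does not change the Gram matrix, so `W*W = R*R` with
`R` block upper triangular. Then `H₁₁ = R₁₁*R₁₁`, `H₁₂ = R₁₁*R₁₂`, `H₂₂ = R₁₂*R₁₂ + R₂₂*R₂₂`, and since
`R₁₁` is invertible, `H₂₁H₁₁⁻¹H₁₂ = R₁₂*R₁₁(R₁₁⁻¹R₁₁*⁻¹)R₁₁*R₁₂ = R₁₂*R₁₂`.
-/

open Matrix

namespace Matrix

variable {l m n o α : Type*}

theorem conjTranspose_mul_self_isometry_mul [Fintype m] [Semiring α] [StarRing α]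
    [DecidableEq m] {Q : Matrix m m α} (hQ : Qᴴ * Q = 1) (R : Matrix m n α) :
    (Q * R)ᴴ * (Q * R) = Rᴴ * R := by
  rw [conjTranspose_mul, Matrix.mul_assoc, ← Matrix.mul_assoc Qᴴ, hQ, Matrix.one_mul]

theorem fromBlocks_zero₂₁_conjTranspose_mul_self [Fintype l] [Fintype m] [Semiring α]
    [StarRing α] (A : Matrix l n α) (B : Matrix l o α) (D : Matrix m o α) :
    (fromBlocks A B 0 D)ᴴ * fromBlocks A B 0 D =
      fromBlocks (Aᴴ * A) (Aᴴ * B) (Bᴴ * A) (Bᴴ * B + Dᴴ * D) := by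
  simp [fromBlocks_conjTranspose, fromBlocks_multiply]

theorem conjTranspose_mul_mul_inv_conjTranspose_mul_self_mul [Fintype l] [DecidableEq l]
    [CommRing α] [StarRing α] {A : Matrix l l α} (hA : IsUnit A) (B : Matrix l o α) :
    Bᴴ * A * (Aᴴ * A)⁻¹ * (Aᴴ * B) = Bᴴ * B := by
  calc Bᴴ * A * (Aᴴ * A)⁻¹ * (Aᴴ * B)
      = Bᴴ * (A * A⁻¹) * (Aᴴ⁻¹ * Aᴴ) * B := by
        simp only [Matrix.mul_inv_rev, Matrix.mul_assoc]
    _ = Bᴴ * B := by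
        rw [mul_nonsing_inv _ ((isUnit_iff_isUnit_det A).mp hA),
          nonsing_inv_mul _ ((isUnit_iff_isUnit_det Aᴴ).mp hA.star), Matrix.mul_one, Matrix.mul_one]

end Matrix

theorem trailing_block_gram_eq_schur_complement_general {k m n : ℕ}
    (W : Matrix (Fin k ⊕ Fin (m - k)) (Fin k ⊕ Fin (n - k)) ℂ)
    (Q : Matrix (Fin k ⊕ Fin (m - k)) (Fin k ⊕ Fin (m - k)) ℂ) (hQ : Qᴴ * Q = 1)
    (R11 : Matrix (Fin k) (Fin k) ℂ) (hR11 : IsUnit R11)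
    (R12 : Matrix (Fin k) (Fin (n - k)) ℂ)
    (R22 : Matrix (Fin (m - k)) (Fin (n - k)) ℂ)
    (hW : W = Q * Matrix.fromBlocks R11 R12 0 R22) :
    R22ᴴ * R22 =
      (Wᴴ * W).toBlocks₂₂ -
        (Wᴴ * W).toBlocks₂₁ * ((Wᴴ * W).toBlocks₁₁)⁻¹ * (Wᴴ * W).toBlocks₁₂ := by
  rw [hW, conjTranspose_mul_self_isometry_mul hQ, fromBlocks_zero₂₁_conjTranspose_mul_self,
    toBlocks_fromBlocks₁₁, toBlocks_fromBlocks₁₂, toBlocks_fromBlocks₂₁, toBlocks_fromBlocks₂₂,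
    conjTranspose_mul_mul_inv_conjTranspose_mul_self_mul hR11, add_sub_cancel_left]

/-- After `k` steps of (Householder) QR, the Gram matrix of the trailing block
equals the Schur complement of `H₁₁` in the Gram matrix `H = W*W`:
`R₂₂*R₂₂ = H₂₂ − H₂₁H₁₁⁻¹H₁₂`. -/
theorem trailing_block_gram_eq_schur_complement {k m n : ℕ} (hkm : k ≤ m) (hkn : k ≤ n)
    (W : Matrix (Fin k ⊕ Fin (m - k)) (Fin k ⊕ Fin (n - k)) ℂ)
    (Q : Matrix (Fin k ⊕ Fin (m - k)) (Fin k ⊕ Fin (m - k)) ℂ) (hQ : Qᴴ * Q = 1)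
    (R11 : Matrix (Fin k) (Fin k) ℂ) (hR11 : IsUnit R11)
    (R12 : Matrix (Fin k) (Fin (n - k)) ℂ)
    (R22 : Matrix (Fin (m - k)) (Fin (n - k)) ℂ)
    (hW : W = Q * Matrix.fromBlocks R11 R12 0 R22) :
    R22ᴴ * R22 =
      (Wᴴ * W).toBlocks₂₂ -
        (Wᴴ * W).toBlocks₂₁ * ((Wᴴ * W).toBlocks₁₁)⁻¹ * (Wᴴ * W).toBlocks₁₂ :=
  trailing_block_gram_eq_schur_complement_general W Q hQ R11 hR11 R12 R22 hW
end
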